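/- arXiv:1901.03703 — 8 statements merged into one kernel-verified Lean document; each statement's English description precedes it below -/
import Mathlib

section
/- Let K be a nonzero bounded linear operator on H with closed range R(K). Let Λ = (Λ_i)_{i∈I} be a Bessel g-sequence with frame operator S_Λ such that S_Λ(R(K)) ⊆ R(K), and suppose there exists a Bessel g-sequence Γ = (Γ_i)_{i∈I} with Bessel bound D > 0 such that g = ∑_{i∈I} Λ_i* (Γ_i g) for every g ∈ R(K). Then Λ is a K-g-frame for H; in fact D⁻¹‖K‖⁻² ‖K* f‖² ≤ ∑_{i∈I} ‖Λ_i f‖² for every f ∈ H. -/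
/-!
Put `g = K K* f ∈ R(K)`. Pairing the reproducing formula for `g` with `f` gives
`‖K* f‖² = ⟪f, g⟫ = ∑ᵢ ⟪Λᵢ f, Γᵢ g⟫`, and Cauchy–Schwarz in `ℓ²` bounds this by
`(∑ᵢ ‖Λᵢ f‖²)^{1/2} (D ‖K‖² ‖K* f‖²)^{1/2}`; dividing by `‖K* f‖` gives the lower frame bound.
-/

open ContinuousLinearMap

noncomputable section

variable {I : Type*} {H : Type*} [NormedAddCommGroup H] [InnerProductSpace ℂ H] [CompleteSpace H]
  {G : I → Type*} [∀ i, NormedAddCommGroup (G i)] [∀ i, InnerProductSpace ℂ (G i)]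
  [∀ i, CompleteSpace (G i)]

/-- `Λ` is a Bessel g-sequence: for some `B > 0`, `∑ᵢ ‖Λᵢ f‖² ≤ B ‖f‖²` for all `f`. -/
def IsGBessel (Λ : ∀ i, H →L[ℂ] G i) : Prop :=
  ∃ B : ℝ, 0 < B ∧ ∀ f : H,
    Summable (fun i => ‖Λ i f‖ ^ 2) ∧ (∑' i, ‖Λ i f‖ ^ 2) ≤ B * ‖f‖ ^ 2

/-- `Λ` is a `K`-g-frame: for some `A, B > 0`,
`A ‖K* f‖² ≤ ∑ᵢ ‖Λᵢ f‖² ≤ B ‖f‖²` for all `f`. -/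
def IsKgFrame (K : H →L[ℂ] H) (Λ : ∀ i, H →L[ℂ] G i) : Prop :=
  ∃ A B : ℝ, 0 < A ∧ 0 < B ∧ ∀ f : H,
    Summable (fun i => ‖Λ i f‖ ^ 2) ∧
    A * ‖ContinuousLinearMap.adjoint K f‖ ^ 2 ≤ (∑' i, ‖Λ i f‖ ^ 2) ∧
    (∑' i, ‖Λ i f‖ ^ 2) ≤ B * ‖f‖ ^ 2

/-- `T : (⊕ᵢ Hᵢ)_{ℓ²} → H` is the synthesis operator of `Λ`, characterized by its adjoint
(the analysis operator) satisfying `(T* f)ᵢ = Λᵢ f` for all `f`. -/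
def IsSynthesis (Λ : ∀ i, H →L[ℂ] G i) (T : lp G 2 →L[ℂ] H) : Prop :=
  ∀ (f : H) (i : I), (ContinuousLinearMap.adjoint T f : ∀ i, G i) i = Λ i f

/-- `Γ` is a `K`-dual (Bessel g-sequence) of `Λ`: `K f = ∑ᵢ Λᵢ* (Γᵢ f)` for all `f`,
the sum converging in `H`. -/
def IsKDual (K : H →L[ℂ] H) (Λ Γ : ∀ i, H →L[ℂ] G i) : Prop :=
  ∀ f : H, HasSum (fun i => ContinuousLinearMap.adjoint (Λ i) (Γ i f)) (K f)

section SquareSummable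

variable {ι : Type*} {E : ι → Type*} [∀ i, NormedAddCommGroup (E i)]

theorem lp.norm_sq_eq_tsum (x : lp E 2) : ‖x‖ ^ 2 = ∑' i, ‖x i‖ ^ 2 := by
  simpa using lp.norm_rpow_eq_tsum (p := 2) (by norm_num) x

variable [∀ i, InnerProductSpace ℂ (E i)]

theorem norm_sq_le_of_hasSum_inner {x y : ∀ i, E i} (hx : Summable fun i => ‖x i‖ ^ 2)
    (hy : Summable fun i => ‖y i‖ ^ 2) {s : ℂ} (hs : HasSum (fun i => inner ℂ (x i) (y i)) s) :
    ‖s‖ ^ 2 ≤ (∑' i, ‖x i‖ ^ 2) * ∑' i, ‖y i‖ ^ 2 := by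
  let X : lp E 2 := ⟨x, memℓp_gen (by simpa using hx)⟩
  let Y : lp E 2 := ⟨y, memℓp_gen (by simpa using hy)⟩
  have hXY : inner ℂ X Y = s := (lp.hasSum_inner X Y).unique hs
  rw [← hXY, ← lp.norm_sq_eq_tsum X, ← lp.norm_sq_eq_tsum Y, ← mul_pow]
  gcongr
  exact norm_inner_le_norm X Y

end SquareSummable

theorem hasSum_inner_of_hasSum_adjoint {Λ : ∀ i, H →L[ℂ] G i} {y : ∀ i, G i} {g : H}
    (hg : HasSum (fun i => adjoint (Λ i) (y i)) g) (f : H) :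
    HasSum (fun i => inner ℂ (Λ i f) (y i)) (inner ℂ f g) := by
  simpa only [innerSL_apply_apply, adjoint_inner_right] using hg.mapL (innerSL ℂ f)

theorem norm_adjoint_sq_le_of_dual_on_range {K : H →L[ℂ] H} {Λ Γ : ∀ i, H →L[ℂ] G i}
    {D : ℝ} (hD : 0 ≤ D)
    (hΓ : ∀ f : H, Summable (fun i => ‖Γ i f‖ ^ 2) ∧ (∑' i, ‖Γ i f‖ ^ 2) ≤ D * ‖f‖ ^ 2)
    (hdual : ∀ g ∈ Set.range K, HasSum (fun i => adjoint (Λ i) (Γ i g)) g)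
    {f : H} (hΛf : Summable fun i => ‖Λ i f‖ ^ 2) :
    ‖adjoint K f‖ ^ 2 ≤ D * ‖K‖ ^ 2 * ∑' i, ‖Λ i f‖ ^ 2 := by
  set g := K (adjoint K f)
  set N := ‖adjoint K f‖ ^ 2
  set L := ∑' i, ‖Λ i f‖ ^ 2
  have hfg : inner ℂ f g = (N : ℂ) := by
    rw [← adjoint_inner_left, inner_self_eq_norm_sq_to_K]
    norm_cast
  have hsum := hasSum_inner_of_hasSum_adjoint (hdual g ⟨_, rfl⟩) f
  have hN : N ^ 2 ≤ D * ‖K‖ ^ 2 * L * N := calc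
    N ^ 2 = ‖inner ℂ f g‖ ^ 2 := by rw [hfg, Complex.norm_real, Real.norm_of_nonneg (by positivity)]
    _ ≤ L * ∑' i, ‖Γ i g‖ ^ 2 := norm_sq_le_of_hasSum_inner hΛf (hΓ g).1 hsum
    _ ≤ L * (D * ‖g‖ ^ 2) := by gcongr; exact (hΓ g).2
    _ ≤ L * (D * (‖K‖ * ‖adjoint K f‖) ^ 2) := by gcongr; exact K.le_opNorm _
    _ = D * ‖K‖ ^ 2 * L * N := by ring
  have hL : 0 ≤ L := tsum_nonneg fun i => by positivity
  have hc : 0 ≤ D * ‖K‖ ^ 2 * L := by positivity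
  nlinarith

theorem isKgFrame_of_dual_on_range_general
    (K : H →L[ℂ] H) (hK : K ≠ 0)
    (Λ Γ : ∀ i, H →L[ℂ] G i) (hΛ : IsGBessel Λ)
    (D : ℝ) (hD : 0 < D)
    (hΓ : ∀ f : H, Summable (fun i => ‖Γ i f‖ ^ 2) ∧ (∑' i, ‖Γ i f‖ ^ 2) ≤ D * ‖f‖ ^ 2)
    (hdual : ∀ g ∈ Set.range K,
      HasSum (fun i => ContinuousLinearMap.adjoint (Λ i) (Γ i g)) g) :
    IsKgFrame K Λ ∧ ∀ f : H,
      D⁻¹ * (‖K‖ ^ 2)⁻¹ * ‖ContinuousLinearMap.adjoint K f‖ ^ 2 ≤ ∑' i, ‖Λ i f‖ ^ 2 := by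
  obtain ⟨B, hB, hΛB⟩ := hΛ
  have hDK : 0 < D * ‖K‖ ^ 2 := by have := norm_pos_iff.mpr hK; positivity
  have hlower (f : H) : D⁻¹ * (‖K‖ ^ 2)⁻¹ * ‖adjoint K f‖ ^ 2 ≤ ∑' i, ‖Λ i f‖ ^ 2 := by
    rw [← mul_inv, inv_mul_le_iff₀ hDK]
    exact norm_adjoint_sq_le_of_dual_on_range hD.le hΓ hdual (hΛB f).1
  exact ⟨⟨_, B, by positivity, hB, fun f => ⟨(hΛB f).1, hlower f, (hΛB f).2⟩⟩, hlower⟩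

/-- if `K ≠ 0` has closed range, `Λ` is Bessel with frame operator `S`
satisfying `S(R(K)) ⊆ R(K)`, and a Bessel g-sequence `Γ` with bound `D` reproduces every
`g ∈ R(K)` as `g = ∑ᵢ Λᵢ* (Γᵢ g)`, then `Λ` is a `K`-g-frame; in fact
`D⁻¹ ‖K‖⁻² ‖K* f‖² ≤ ∑ᵢ ‖Λᵢ f‖²` for all `f`. -/
theorem isKgFrame_of_dual_on_range
    (K : H →L[ℂ] H) (hK : K ≠ 0) (hclosed : IsClosed (Set.range K))
    (Λ Γ : ∀ i, H →L[ℂ] G i) (hΛ : IsGBessel Λ)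
    (S : H →L[ℂ] H)
    (hS : ∀ f : H, HasSum (fun i => ContinuousLinearMap.adjoint (Λ i) (Λ i f)) (S f))
    (hSrange : ∀ f ∈ Set.range K, S f ∈ Set.range K)
    (D : ℝ) (hD : 0 < D)
    (hΓ : ∀ f : H, Summable (fun i => ‖Γ i f‖ ^ 2) ∧ (∑' i, ‖Γ i f‖ ^ 2) ≤ D * ‖f‖ ^ 2)
    (hdual : ∀ g ∈ Set.range K,
      HasSum (fun i => ContinuousLinearMap.adjoint (Λ i) (Γ i g)) g) :
    IsKgFrame K Λ ∧ ∀ f : H,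
      D⁻¹ * (‖K‖ ^ 2)⁻¹ * ‖ContinuousLinearMap.adjoint K f‖ ^ 2 ≤ ∑' i, ‖Λ i f‖ ^ 2 :=
  isKgFrame_of_dual_on_range_general K hK Λ Γ hΛ D hD hΓ hdual
end
end

section
/- Let K be a bounded linear operator on H and let Λ = (Λ_i)_{i∈I} be a g-sequence. Then Λ is a K-g-frame for H if and only if Λ is a Bessel g-sequence and there exists a Bessel g-sequence Γ = (Γ_i)_{i∈I} such that K f = ∑_{i∈I} Λ_i* (Γ_i f) for all f ∈ H. -/
/-!
For a Bessel g-sequence `Λ` let `U_Λ : H → ℓ²(⊕ᵢ Hᵢ)`, `f ↦ (Λᵢ f)ᵢ`, be its analysis operator;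
its adjoint is the synthesis operator `(xᵢ)ᵢ ↦ ∑ᵢ Λᵢ* xᵢ`. The lower `K`-frame bound says
`‖K* f‖ ≤ c ‖U_Λ f‖`, and a Bessel `Γ` is a `K`-dual of `Λ` exactly when `K = U_Λ* U_Γ`.
Given the bound, Douglas' factorization lemma produces `X` with `K = U_Λ* X`, and the coordinates
of `X` form a `K`-dual. Conversely `K = U_Λ* U_Γ` gives `‖K* f‖ = ‖U_Γ* U_Λ f‖ ≤ ‖U_Γ‖ ‖U_Λ f‖`.
-/

open ContinuousLinearMap

namespace lp

variable {ι : Type*} {E : ι → Type*} [∀ i, NormedAddCommGroup (E i)]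

theorem memℓp_two_of_summable_sq {x : ∀ i, E i} (h : Summable fun i => ‖x i‖ ^ 2) :
    Memℓp x 2 :=
  memℓp_gen (by simpa using h)

theorem summable_norm_sq (x : lp E 2) : Summable fun i => ‖x i‖ ^ 2 := by
  simpa using (lp.memℓp x).summable (by simp)

theorem norm_sq_eq_tsum_s5 (x : lp E 2) : ‖x‖ ^ 2 = ∑' i, ‖x i‖ ^ 2 := by
  simpa using lp.norm_rpow_eq_tsum (p := 2) (by simp) x

end lp

namespace ContinuousLinearMap

variable {𝕜 E F G : Type*} [RCLike 𝕜]

/-- Douglas' factorization lemma. `Y` is `V ∘ U⁻¹` on the range of `U`, extended by continuity to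
its closure `M` and precomposed with the orthogonal projection onto `M`. -/
theorem exists_comp_eq_of_norm_le [NormedAddCommGroup E] [NormedSpace 𝕜 E]
    [NormedAddCommGroup F] [InnerProductSpace 𝕜 F] [CompleteSpace F]
    [NormedAddCommGroup G] [NormedSpace 𝕜 G] [CompleteSpace G]
    (U : E →L[𝕜] F) (V : E →L[𝕜] G) {c : ℝ} (h : ∀ x, ‖V x‖ ≤ c * ‖U x‖) :
    ∃ Y : F →L[𝕜] G, Y ∘L U = V := by
  set M := (LinearMap.range (U : E →ₗ[𝕜] F)).topologicalClosure
  have hUM : ∀ x, U x ∈ M :=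
    fun x => Submodule.le_topologicalClosure _ (LinearMap.mem_range_self (U : E →ₗ[𝕜] F) x)
  let e : E →ₗ[𝕜] M := (U : E →ₗ[𝕜] F).codRestrict M hUM
  have he : DenseRange e := by
    rw [DenseRange, Subtype.dense_iff, ← Set.range_comp]
    exact (Submodule.topologicalClosure_coe _).subset
  refine ⟨(V : E →ₗ[𝕜] G).extendOfNorm e ∘L M.orthogonalProjectionOnto, ext fun x => ?_⟩
  have hproj : M.orthogonalProjectionOnto (U x) = e x :=
    M.orthogonalProjectionOnto_mem_subspace_eq_self ⟨U x, hUM x⟩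
  simp only [comp_apply, hproj]
  exact LinearMap.extendOfNorm_eq he ⟨c, h⟩ x

theorem exists_comp_eq_of_norm_adjoint_le [NormedAddCommGroup E] [InnerProductSpace 𝕜 E]
    [CompleteSpace E] [NormedAddCommGroup F] [InnerProductSpace 𝕜 F] [CompleteSpace F]
    [NormedAddCommGroup G] [InnerProductSpace 𝕜 G] [CompleteSpace G]
    (T : E →L[𝕜] G) (K : F →L[𝕜] G) {c : ℝ} (h : ∀ y, ‖adjoint K y‖ ≤ c * ‖adjoint T y‖) :
    ∃ X : F →L[𝕜] E, T ∘L X = K := by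
  obtain ⟨Y, hY⟩ := (adjoint T).exists_comp_eq_of_norm_le (adjoint K) h
  refine ⟨adjoint Y, ?_⟩
  simpa only [adjoint_comp, adjoint_adjoint] using congrArg adjoint hY

end ContinuousLinearMap

section GSequence

variable {I : Type*} {H : Type*} [NormedAddCommGroup H] [InnerProductSpace ℂ H]
  {G : I → Type*} [∀ i, NormedAddCommGroup (G i)] [∀ i, InnerProductSpace ℂ (G i)]
  {Λ Γ : ∀ i, H →L[ℂ] G i}

namespace IsGBessel

variable (hΛ : IsGBessel Λ)

noncomputable def analysisOp : H →L[ℂ] lp G 2 :=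
  LinearMap.mkContinuousOfExistsBound
    { toFun := fun f => ⟨fun i => Λ i f, lp.memℓp_two_of_summable_sq (hΛ.choose_spec.2 f).1⟩
      map_add' := fun f g => Subtype.ext <| funext fun i => map_add (Λ i) f g
      map_smul' := fun c f => Subtype.ext <| funext fun i => map_smul (Λ i) c f }
    (by
      obtain ⟨B, -, hB⟩ := hΛ
      refine ⟨√B, fun f => ?_⟩
      rw [← Real.sqrt_sq (norm_nonneg f), ← Real.sqrt_mul' _ (sq_nonneg _),
        Real.le_sqrt (norm_nonneg _) (by positivity), LinearMap.coe_mk, AddHom.coe_mk,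
        lp.norm_sq_eq_tsum_s5]
      exact (hB f).2)

theorem norm_analysisOp_sq (f : H) : ‖hΛ.analysisOp f‖ ^ 2 = ∑' i, ‖Λ i f‖ ^ 2 :=
  lp.norm_sq_eq_tsum_s5 _

end IsGBessel

theorem isGBessel_evalCLM_comp (X : H →L[ℂ] lp G 2) :
    IsGBessel fun i => lp.evalCLM ℂ G 2 i ∘L X := by
  refine ⟨‖X‖ ^ 2 + 1, by positivity, fun f => ⟨lp.summable_norm_sq (X f), ?_⟩⟩
  calc ∑' i, ‖(lp.evalCLM ℂ G 2 i ∘L X) f‖ ^ 2 = ‖X f‖ ^ 2 := (lp.norm_sq_eq_tsum_s5 _).symm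
    _ ≤ (‖X‖ * ‖f‖) ^ 2 := by gcongr; exact X.le_opNorm f
    _ ≤ (‖X‖ ^ 2 + 1) * ‖f‖ ^ 2 := by nlinarith [sq_nonneg ‖f‖]

variable [CompleteSpace H] {K : H →L[ℂ] H}

theorem IsKgFrame.isGBessel (h : IsKgFrame K Λ) : IsGBessel Λ := by
  obtain ⟨_, B, _, hB, h⟩ := h
  exact ⟨B, hB, fun f => ⟨(h f).1, (h f).2.2⟩⟩

theorem IsKgFrame.exists_norm_adjoint_le (h : IsKgFrame K Λ) (hΛ : IsGBessel Λ) :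
    ∃ c, ∀ f, ‖adjoint K f‖ ≤ c * ‖hΛ.analysisOp f‖ := by
  obtain ⟨A, _, hA, _, h⟩ := h
  refine ⟨√A⁻¹, fun f => ?_⟩
  rw [← Real.sqrt_sq (norm_nonneg (hΛ.analysisOp f)), ← Real.sqrt_mul (inv_nonneg.2 hA.le),
    Real.le_sqrt (norm_nonneg _) (by positivity), hΛ.norm_analysisOp_sq, inv_mul_eq_div,
    le_div_iff₀ hA, mul_comm]
  exact (h f).2.1

theorem IsGBessel.isKgFrame_of_norm_adjoint_le (hΛ : IsGBessel Λ) {c : ℝ}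
    (h : ∀ f, ‖adjoint K f‖ ≤ c * ‖hΛ.analysisOp f‖) : IsKgFrame K Λ := by
  obtain ⟨B, hB, hΛB⟩ := id hΛ
  refine ⟨(c ^ 2 + 1)⁻¹, B, by positivity, hB, fun f => ⟨(hΛB f).1, ?_, (hΛB f).2⟩⟩
  have hsq : ‖adjoint K f‖ ^ 2 ≤ c ^ 2 * ‖hΛ.analysisOp f‖ ^ 2 := by
    rw [← mul_pow]; exact pow_le_pow_left₀ (norm_nonneg _) (h f) 2
  rw [← hΛ.norm_analysisOp_sq, inv_mul_le_iff₀ (by positivity)]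
  nlinarith [sq_nonneg ‖hΛ.analysisOp f‖]

variable [∀ i, CompleteSpace (G i)]

theorem IsSynthesis.hasSum_apply {T : lp G 2 →L[ℂ] H} (hT : IsSynthesis Λ T) (x : lp G 2) :
    HasSum (fun i => adjoint (Λ i) (x i)) (T x) := by
  classical
  have hsingle : ∀ i (a : G i), T (lp.single 2 i a) = adjoint (Λ i) a := fun i a =>
    ext_inner_right ℂ fun v => by
      rw [← adjoint_inner_right T, lp.inner_single_left, hT, adjoint_inner_left]
  simpa only [hsingle] using (lp.hasSum_single (by simp) x).mapL T

theorem IsGBessel.isSynthesis_adjoint_analysisOp (hΛ : IsGBessel Λ) :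
    IsSynthesis Λ (adjoint hΛ.analysisOp) := by
  intro f i
  rw [adjoint_adjoint]
  rfl

theorem isKDual_evalCLM_comp (hΛ : IsGBessel Λ) {X : H →L[ℂ] lp G 2}
    (hX : adjoint hΛ.analysisOp ∘L X = K) : IsKDual K Λ fun i => lp.evalCLM ℂ G 2 i ∘L X := by
  intro f
  rw [← hX]
  exact hΛ.isSynthesis_adjoint_analysisOp.hasSum_apply (X f)

theorem IsKDual.adjoint_analysisOp_comp_analysisOp (hK : IsKDual K Λ Γ) (hΛ : IsGBessel Λ)
    (hΓ : IsGBessel Γ) : adjoint hΛ.analysisOp ∘L hΓ.analysisOp = K :=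
  ext fun f => (hΛ.isSynthesis_adjoint_analysisOp.hasSum_apply (hΓ.analysisOp f)).unique (hK f)

end GSequence

variable {I : Type*} {H : Type*} [NormedAddCommGroup H] [InnerProductSpace ℂ H] [CompleteSpace H]
  {G : I → Type*} [∀ i, NormedAddCommGroup (G i)] [∀ i, InnerProductSpace ℂ (G i)]
  [∀ i, CompleteSpace (G i)]

/-- `Λ` is a `K`-g-frame iff `Λ` is a Bessel g-sequence and there is a Bessel
g-sequence `Γ` with `K f = ∑ᵢ Λᵢ* (Γᵢ f)` for all `f`. -/
theorem isKgFrame_iff_exists_KDual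
    (K : H →L[ℂ] H) (Λ : ∀ i, H →L[ℂ] G i) :
    IsKgFrame K Λ ↔
      IsGBessel Λ ∧ ∃ Γ : ∀ i, H →L[ℂ] G i, IsGBessel Γ ∧ IsKDual K Λ Γ := by
  constructor
  · intro hK
    have hΛ := hK.isGBessel
    obtain ⟨c, hc⟩ := hK.exists_norm_adjoint_le hΛ
    obtain ⟨X, hX⟩ := (adjoint hΛ.analysisOp).exists_comp_eq_of_norm_adjoint_le K (c := c)
      (by simpa only [adjoint_adjoint] using hc)
    exact ⟨hΛ, _, isGBessel_evalCLM_comp X, isKDual_evalCLM_comp hΛ hX⟩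
  · rintro ⟨hΛ, Γ, hΓ, hK⟩
    refine hΛ.isKgFrame_of_norm_adjoint_le (c := ‖hΓ.analysisOp‖) fun f => ?_
    rw [← hK.adjoint_analysisOp_comp_analysisOp hΛ hΓ, adjoint_comp, adjoint_adjoint,
      ← adjoint.norm_map hΓ.analysisOp]
    exact (adjoint hΓ.analysisOp).le_opNorm _
end

section
/- Let K be a bounded linear operator on H, and let Λ = (Λ_i)_{i∈I} and Γ = (Γ_i)_{i∈I} be two K-g-frames for H such that ∑_{i∈I} Λ_i*(Γ_i f) = 0 for all f ∈ H (i.e., T_Λ T_Γ* = 0). Let U, V be bounded linear operators on H such that U K* = K* U and U is bounded below, i.e., there is C > 0 with C‖f‖² ≤ ‖Uf‖² for all f ∈ H. Then the g-sequence (Λ_i U + Γ_i V)_{i∈I} is a K-g-frame for H. -/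
open ContinuousLinearMap

noncomputable section

variable {I : Type*} {H : Type*} [NormedAddCommGroup H] [InnerProductSpace ℂ H] [CompleteSpace H]
  {G : I → Type*} [∀ i, NormedAddCommGroup (G i)] [∀ i, InnerProductSpace ℂ (G i)]
  [∀ i, CompleteSpace (G i)]

/-! The cross terms `⟪Λᵢ U f, Γᵢ V f⟫` sum to `⟪U f, T_Λ T_Γ* V f⟫ = 0`, so the squared norms of
`Λᵢ U f + Γᵢ V f` sum to `∑ ‖Λᵢ U f‖² + ∑ ‖Γᵢ V f‖²`. The Bessel bounds of `Λ`, `Γ` and the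
boundedness of `U`, `V` give the upper frame bound; for the lower one,
`∑ ‖Λᵢ U f‖² ≥ A ‖K* U f‖² = A ‖U K* f‖² ≥ A C ‖K* f‖²`. -/

theorem hasSum_norm_add_sq_of_hasSum_inner_eq_zero {𝕜 ι : Type*} [RCLike 𝕜] {E : ι → Type*}
    [∀ i, NormedAddCommGroup (E i)] [∀ i, InnerProductSpace 𝕜 (E i)] {x y : ∀ i, E i} {a b : ℝ}
    (hx : HasSum (fun i => ‖x i‖ ^ 2) a) (hy : HasSum (fun i => ‖y i‖ ^ 2) b)
    (hxy : HasSum (fun i => inner 𝕜 (x i) (y i)) 0) :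
    HasSum (fun i => ‖x i + y i‖ ^ 2) (a + b) := by
  have h := (hx.add ((RCLike.hasSum_re 𝕜 hxy).mul_left 2)).add hy
  simp only [map_zero, mul_zero, add_zero] at h
  exact h.congr_fun fun i => norm_add_sq (𝕜 := 𝕜) (x i) (y i)

theorem hasSum_inner_apply_of_hasSum_adjoint {𝕜 ι E : Type*} [RCLike 𝕜] [NormedAddCommGroup E]
    [InnerProductSpace 𝕜 E] [CompleteSpace E] {F : ι → Type*} [∀ i, NormedAddCommGroup (F i)]
    [∀ i, InnerProductSpace 𝕜 (F i)] [∀ i, CompleteSpace (F i)] {Λ : ∀ i, E →L[𝕜] F i}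
    {y : ∀ i, F i} {s : E} (h : HasSum (fun i => adjoint (Λ i) (y i)) s) (x : E) :
    HasSum (fun i => inner 𝕜 (Λ i x) (y i)) (inner 𝕜 x s) := by
  simpa only [innerSL_apply_apply, adjoint_inner_right] using h.mapL (innerSL 𝕜 x)

theorem ContinuousLinearMap.sq_norm_apply_le {𝕜 E F : Type*} [NontriviallyNormedField 𝕜]
    [SeminormedAddCommGroup E] [SeminormedAddCommGroup F] [NormedSpace 𝕜 E] [NormedSpace 𝕜 F]
    (T : E →L[𝕜] F) (x : E) : ‖T x‖ ^ 2 ≤ ‖T‖ ^ 2 * ‖x‖ ^ 2 := by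
  rw [← mul_pow]
  exact pow_le_pow_left₀ (norm_nonneg _) (T.le_opNorm x) 2

section

variable {ι E : Type*} [NormedAddCommGroup E] [InnerProductSpace ℂ E] {F : ι → Type*}
  [∀ i, NormedAddCommGroup (F i)] [∀ i, InnerProductSpace ℂ (F i)]

theorem IsKgFrame.isGBessel_s8 [CompleteSpace E] {K : E →L[ℂ] E} {Λ : ∀ i, E →L[ℂ] F i}
    (hΛ : IsKgFrame K Λ) : IsGBessel Λ := by
  obtain ⟨_, B, _, hB, hbounds⟩ := hΛ
  exact ⟨B, hB, fun f => ⟨(hbounds f).1, (hbounds f).2.2⟩⟩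

theorem IsGBessel.comp {Λ : ∀ i, E →L[ℂ] F i} (hΛ : IsGBessel Λ) (V : E →L[ℂ] E) :
    IsGBessel (fun i => Λ i ∘L V) := by
  obtain ⟨B, hB, hbounds⟩ := hΛ
  refine ⟨B * (‖V‖ ^ 2 + 1), by positivity, fun f => ⟨(hbounds (V f)).1, ?_⟩⟩
  calc ∑' i, ‖(Λ i ∘L V) f‖ ^ 2 ≤ B * ‖V f‖ ^ 2 := (hbounds (V f)).2
    _ ≤ B * ((‖V‖ ^ 2 + 1) * ‖f‖ ^ 2) := by
      gcongr
      nlinarith [V.sq_norm_apply_le f, sq_nonneg ‖f‖]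
    _ = B * (‖V‖ ^ 2 + 1) * ‖f‖ ^ 2 := by ring

theorem IsKgFrame.comp_of_commute [CompleteSpace E] {K : E →L[ℂ] E} {Λ : ∀ i, E →L[ℂ] F i}
    (hΛ : IsKgFrame K Λ) {U : E →L[ℂ] E} (hUK : U ∘L adjoint K = adjoint K ∘L U) {C : ℝ}
    (hC : 0 < C) (hU : ∀ f : E, C * ‖f‖ ^ 2 ≤ ‖U f‖ ^ 2) :
    IsKgFrame K (fun i => Λ i ∘L U) := by
  obtain ⟨B, hB, hbessel⟩ := hΛ.isGBessel_s8.comp U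
  obtain ⟨A, _, hA, _, hbounds⟩ := hΛ
  refine ⟨A * C, B, by positivity, hB, fun f => ⟨(hbessel f).1, ?_, (hbessel f).2⟩⟩
  calc A * C * ‖adjoint K f‖ ^ 2 ≤ A * ‖U (adjoint K f)‖ ^ 2 := by
        rw [mul_assoc]; gcongr; exact hU _
    _ = A * ‖adjoint K (U f)‖ ^ 2 := by rw [← comp_apply, hUK, comp_apply]
    _ ≤ ∑' i, ‖(Λ i ∘L U) f‖ ^ 2 := (hbounds (U f)).2.1

theorem IsKgFrame.add_of_hasSum_inner_eq_zero [CompleteSpace E] {K : E →L[ℂ] E}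
    {Λ Γ : ∀ i, E →L[ℂ] F i} (hΛ : IsKgFrame K Λ) (hΓ : IsGBessel Γ)
    (horth : ∀ f : E, HasSum (fun i => inner ℂ (Λ i f) (Γ i f)) 0) :
    IsKgFrame K (fun i => Λ i + Γ i) := by
  obtain ⟨A, B₁, hA, hB₁, hΛbounds⟩ := hΛ
  obtain ⟨B₂, hB₂, hΓbounds⟩ := hΓ
  refine ⟨A, B₁ + B₂, hA, by positivity, fun f => ?_⟩
  obtain ⟨hΛsum, hlower, hΛupper⟩ := hΛbounds f
  obtain ⟨hΓsum, hΓupper⟩ := hΓbounds f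
  have hsum := hasSum_norm_add_sq_of_hasSum_inner_eq_zero hΛsum.hasSum hΓsum.hasSum (horth f)
  have hΓnonneg : 0 ≤ ∑' i, ‖Γ i f‖ ^ 2 := tsum_nonneg fun i => sq_nonneg _
  refine ⟨hsum.summable, ?_, ?_⟩ <;> simp only [add_apply, hsum.tsum_eq] <;> linarith

end

/-- if `Λ`, `Γ` are `K`-g-frames with `∑ᵢ Λᵢ*(Γᵢ f) = 0` for all `f`,
`U K* = K* U`, and `U` is bounded below, then `(Λᵢ U + Γᵢ V)ᵢ` is a `K`-g-frame. -/
theorem isKgFrame_comp_add_comp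
    (K : H →L[ℂ] H) (Λ Γ : ∀ i, H →L[ℂ] G i)
    (hΛ : IsKgFrame K Λ) (hΓ : IsKgFrame K Γ)
    (h0 : ∀ f : H, HasSum (fun i => ContinuousLinearMap.adjoint (Λ i) (Γ i f)) 0)
    (U V : H →L[ℂ] H)
    (hUK : U ∘L ContinuousLinearMap.adjoint K = ContinuousLinearMap.adjoint K ∘L U)
    (C : ℝ) (hC : 0 < C) (hU : ∀ f : H, C * ‖f‖ ^ 2 ≤ ‖U f‖ ^ 2) :
    IsKgFrame K (fun i => Λ i ∘L U + Γ i ∘L V) := by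
  refine (hΛ.comp_of_commute hUK hC hU).add_of_hasSum_inner_eq_zero (hΓ.isGBessel_s8.comp V)
    fun f => ?_
  simpa only [add_apply, comp_apply, inner_zero_right] using
    hasSum_inner_apply_of_hasSum_adjoint (h0 (V f)) (U f)
end
end

section
/- Let K be a bounded linear operator on H and let Λ = (Λ_i)_{i∈I} be a K-g-frame for H. If U is a bounded linear operator on H such that U K* = K* U and U is bounded below, i.e., there is C > 0 with C‖f‖² ≤ ‖Uf‖² for all f ∈ H, then the g-sequence (Λ_i U)_{i∈I} is a K-g-frame for H. -/
open ContinuousLinearMap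

noncomputable section

variable {I : Type*} {H : Type*} [NormedAddCommGroup H] [InnerProductSpace ℂ H] [CompleteSpace H]
  {G : I → Type*} [∀ i, NormedAddCommGroup (G i)] [∀ i, InnerProductSpace ℂ (G i)]
  [∀ i, CompleteSpace (G i)]

/-- if `Λ` is a `K`-g-frame, `U K* = K* U` and `U` is bounded below, then
`(Λᵢ U)ᵢ` is a `K`-g-frame. -/
theorem isKgFrame_comp_right
    (K : H →L[ℂ] H) (Λ : ∀ i, H →L[ℂ] G i) (hΛ : IsKgFrame K Λ)
    (U : H →L[ℂ] H)
    (hUK : U ∘L ContinuousLinearMap.adjoint K = ContinuousLinearMap.adjoint K ∘L U)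
    (C : ℝ) (hC : 0 < C) (hU : ∀ f : H, C * ‖f‖ ^ 2 ≤ ‖U f‖ ^ 2) :
    IsKgFrame K (fun i => Λ i ∘L U) := by
  obtain ⟨A, B, hA, hB, h⟩ := hΛ
  refine ⟨A * C, B * (‖U‖ ^ 2 + 1), mul_pos hA hC, by positivity, fun f => ?_⟩
  obtain ⟨hs, hl, hu⟩ := h (U f)
  refine ⟨hs, ?_, ?_⟩
  · calc A * C * ‖ContinuousLinearMap.adjoint K f‖ ^ 2
        = A * (C * ‖ContinuousLinearMap.adjoint K f‖ ^ 2) := by ring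
      _ ≤ A * ‖U (ContinuousLinearMap.adjoint K f)‖ ^ 2 := by
          exact mul_le_mul_of_nonneg_left (hU _) hA.le
      _ = A * ‖ContinuousLinearMap.adjoint K (U f)‖ ^ 2 := by
          rw [← ContinuousLinearMap.comp_apply, hUK]; rfl
      _ ≤ ∑' i, ‖(Λ i ∘L U) f‖ ^ 2 := hl
  · calc (∑' i, ‖(Λ i ∘L U) f‖ ^ 2) ≤ B * ‖U f‖ ^ 2 := hu
      _ ≤ B * (‖U‖ * ‖f‖) ^ 2 := by
          exact mul_le_mul_of_nonneg_left (by
            have := U.le_opNorm f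
            exact pow_le_pow_left₀ (norm_nonneg _) this 2) hB.le
      _ = B * ‖U‖ ^ 2 * ‖f‖ ^ 2 := by ring
      _ ≤ B * (‖U‖ ^ 2 + 1) * ‖f‖ ^ 2 := by nlinarith [sq_nonneg ‖f‖]
end
end

section
/- Let K be a bounded linear operator on H, and let Λ = (Λ_i)_{i∈I} and Γ = (Γ_i)_{i∈I} be two Parseval K-g-frames for H such that ∑_{i∈I} Λ_i*(Γ_i f) = 0 for all f ∈ H (i.e., T_Λ T_Γ* = 0). Then (Λ_i + Γ_i)_{i∈I} is a 2-tight K-g-frame for H, i.e., ∑_{i∈I} ‖(Λ_i + Γ_i) f‖² = 2‖K* f‖² for all f ∈ H. -/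
/- Expanding `‖Λᵢ f + Γᵢ f‖²`, the two squared-norm series each sum to `‖K* f‖²`, and the
cross terms `Re ⟪Λᵢ f, Γᵢ f⟫ = Re ⟪f, Λᵢ* Γᵢ f⟫` sum to `Re ⟪f, ∑ᵢ Λᵢ* Γᵢ f⟫ = 0`. -/

open ContinuousLinearMap

noncomputable section

variable {I : Type*} {H : Type*} [NormedAddCommGroup H] [InnerProductSpace ℂ H] [CompleteSpace H]
  {G : I → Type*} [∀ i, NormedAddCommGroup (G i)] [∀ i, InnerProductSpace ℂ (G i)]
  [∀ i, CompleteSpace (G i)]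

theorem hasSum_inner_apply_of_hasSum_adjoint_apply {𝕜 ι E : Type*} [RCLike 𝕜]
    [NormedAddCommGroup E] [InnerProductSpace 𝕜 E] [CompleteSpace E] {F : ι → Type*}
    [∀ i, NormedAddCommGroup (F i)] [∀ i, InnerProductSpace 𝕜 (F i)] [∀ i, CompleteSpace (F i)]
    (A B : ∀ i, E →L[𝕜] F i) (f : E) {g x : E}
    (h : HasSum (fun i => adjoint (A i) (B i g)) x) :
    HasSum (fun i => inner 𝕜 (A i f) (B i g)) (inner 𝕜 f x) := by
  simpa only [innerSL_apply_apply, adjoint_inner_right] using h.mapL (innerSL 𝕜 f)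

theorem HasSum.norm_add_sq {𝕜 ι : Type*} [RCLike 𝕜] {F : ι → Type*}
    [∀ i, NormedAddCommGroup (F i)] [∀ i, InnerProductSpace 𝕜 (F i)] {a b : ∀ i, F i}
    {α β γ : ℝ} (ha : HasSum (fun i => ‖a i‖ ^ 2) α) (hb : HasSum (fun i => ‖b i‖ ^ 2) β)
    (hab : HasSum (fun i => RCLike.re (inner 𝕜 (a i) (b i))) γ) :
    HasSum (fun i => ‖a i + b i‖ ^ 2) (α + 2 * γ + β) := by
  simpa only [_root_.norm_add_sq (𝕜 := 𝕜)] using (ha.add (hab.mul_left 2)).add hb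

/-- if `Λ`, `Γ` are Parseval `K`-g-frames with `∑ᵢ Λᵢ*(Γᵢ f) = 0` for all
`f`, then `(Λᵢ + Γᵢ)ᵢ` is a 2-tight `K`-g-frame. -/
theorem add_parseval_isTwoTight
    (K : H →L[ℂ] H) (Λ Γ : ∀ i, H →L[ℂ] G i)
    (hΛ : ∀ f : H, Summable (fun i => ‖Λ i f‖ ^ 2) ∧
      (∑' i, ‖Λ i f‖ ^ 2) = ‖ContinuousLinearMap.adjoint K f‖ ^ 2)
    (hΓ : ∀ f : H, Summable (fun i => ‖Γ i f‖ ^ 2) ∧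
      (∑' i, ‖Γ i f‖ ^ 2) = ‖ContinuousLinearMap.adjoint K f‖ ^ 2)
    (h0 : ∀ f : H, HasSum (fun i => ContinuousLinearMap.adjoint (Λ i) (Γ i f)) 0) :
    ∀ f : H, Summable (fun i => ‖(Λ i + Γ i) f‖ ^ 2) ∧
      (∑' i, ‖(Λ i + Γ i) f‖ ^ 2) = 2 * ‖ContinuousLinearMap.adjoint K f‖ ^ 2 := by
  intro f
  have hcross : HasSum (fun i => RCLike.re (inner ℂ (Λ i f) (Γ i f))) 0 := by
    simpa only [inner_zero_right, map_zero] using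
      RCLike.hasSum_re ℂ (hasSum_inner_apply_of_hasSum_adjoint_apply Λ Γ f (h0 f))
  have hsum : HasSum (fun i => ‖(Λ i + Γ i) f‖ ^ 2) (2 * ‖adjoint K f‖ ^ 2) := by
    have h := (hΛ f).1.hasSum.norm_add_sq (hΓ f).1.hasSum hcross
    rwa [(hΛ f).2, (hΓ f).2, mul_zero, add_zero, ← two_mul] at h
  exact ⟨hsum.summable, hsum.tsum_eq⟩
end
end

section
/- Let K be a bounded linear operator on H, and let Λ = (Λ_i)_{i∈I} and Γ = (Γ_i)_{i∈I} be two K-g-frames for H with synthesis operators T₁ and T₂ respectively, such that T₁ T₂* = 0. Let U₁, U₂ be bounded linear operators on H such that Range(T_j) ⊆ Range(U_j* T_j) for j = 1, 2. Then the g-sequence (Λ_i U₁ + Γ_i U₂)_{i∈I} is a K-g-frame for H. -/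
/-! By Douglas' majorization theorem, `Range T₁ ⊆ Range (U₁* T₁)` gives `‖T₁* f‖ ≤ c ‖T₁* U₁ f‖`.
The analysis operator of `(Λᵢ U₁ + Γᵢ U₂)ᵢ` is `f ↦ T₁* U₁ f + T₂* U₂ f`, and `T₁ T₂* = 0` makes
the two summands orthogonal, so `∑ᵢ ‖Λᵢ U₁ f + Γᵢ U₂ f‖² ≥ ‖T₁* U₁ f‖² ≥ c⁻² ‖T₁* f‖²`, which the
lower `K`-g-frame bound of `Λ` controls from below. The upper bound holds for any g-sequence with
a bounded synthesis operator. -/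

open ContinuousLinearMap

noncomputable section

variable {I : Type*} {H : Type*} [NormedAddCommGroup H] [InnerProductSpace ℂ H] [CompleteSpace H]
  {G : I → Type*} [∀ i, NormedAddCommGroup (G i)] [∀ i, InnerProductSpace ℂ (G i)]
  [∀ i, CompleteSpace (G i)]

open scoped InnerProductSpace

section RangeInclusion

variable {𝕜 X Y Z : Type*} [NontriviallyNormedField 𝕜]
  [NormedAddCommGroup X] [NormedSpace 𝕜 X] [CompleteSpace X]
  [NormedAddCommGroup Y] [NormedSpace 𝕜 Y]
  [NormedAddCommGroup Z] [NormedSpace 𝕜 Z] [CompleteSpace Z]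

/-- Open mapping theorem applied to the projection `{(x, z) | S x = T z} → X`. -/
theorem exists_preimage_norm_le_of_range_subset (S : X →L[𝕜] Y) (T : Z →L[𝕜] Y)
    (h : Set.range S ⊆ Set.range T) :
    ∃ C > 0, ∀ x, ∃ z, T z = S x ∧ ‖z‖ ≤ C * ‖x‖ := by
  set E := LinearMap.ker (S ∘L fst 𝕜 X Z - T ∘L snd 𝕜 X Z : X × Z →ₗ[𝕜] Y)
  have : CompleteSpace E := (isClosed_ker (S ∘L fst 𝕜 X Z - T ∘L snd 𝕜 X Z)).completeSpace_coe
  have hsurj : Function.Surjective (fst 𝕜 X Z ∘L E.subtypeL) := fun x => by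
    obtain ⟨z, hz⟩ := h ⟨x, rfl⟩
    exact ⟨⟨(x, z), by simp [E, hz]⟩, rfl⟩
  obtain ⟨C, hC, hpre⟩ := exists_preimage_norm_le _ hsurj
  refine ⟨C, hC, fun x => ?_⟩
  obtain ⟨⟨⟨x', z⟩, hxz⟩, rfl, hnorm⟩ := hpre x
  have hxz : S x' - T z = 0 := hxz
  exact ⟨z, (sub_eq_zero.1 hxz).symm, (_root_.norm_snd_le _).trans hnorm⟩

end RangeInclusion

section Douglas

variable {𝕜 X Y Z : Type*} [RCLike 𝕜]
  [NormedAddCommGroup X] [InnerProductSpace 𝕜 X] [CompleteSpace X]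
  [NormedAddCommGroup Y] [InnerProductSpace 𝕜 Y] [CompleteSpace Y]
  [NormedAddCommGroup Z] [InnerProductSpace 𝕜 Z] [CompleteSpace Z]

theorem exists_norm_adjoint_le_of_range_subset (S : X →L[𝕜] Y) (T : Z →L[𝕜] Y)
    (h : Set.range S ⊆ Set.range T) :
    ∃ C > 0, ∀ y, ‖adjoint S y‖ ≤ C * ‖adjoint T y‖ := by
  obtain ⟨C, hC, hpre⟩ := exists_preimage_norm_le_of_range_subset S T h
  refine ⟨C, hC, fun y => ?_⟩
  obtain ⟨z, hz, hzn⟩ := hpre (adjoint S y)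
  have : ‖adjoint S y‖ ^ 2 ≤ C * ‖adjoint T y‖ * ‖adjoint S y‖ :=
    calc ‖adjoint S y‖ ^ 2 = RCLike.re ⟪adjoint T y, z⟫_𝕜 := by
          rw [← inner_self_eq_norm_sq (𝕜 := 𝕜), adjoint_inner_left, adjoint_inner_left, hz]
      _ ≤ ‖adjoint T y‖ * ‖z‖ := re_inner_le_norm _ _
      _ ≤ ‖adjoint T y‖ * (C * ‖adjoint S y‖) := by gcongr
      _ = C * ‖adjoint T y‖ * ‖adjoint S y‖ := by ring
  nlinarith [norm_nonneg (adjoint S y), mul_nonneg hC.le (norm_nonneg (adjoint T y))]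

theorem norm_adjoint_add_adjoint_sq_of_comp_adjoint_eq_zero {T₁ T₂ : X →L[𝕜] Y}
    (h0 : T₁ ∘L adjoint T₂ = 0) (y₁ y₂ : Y) :
    ‖adjoint T₁ y₁ + adjoint T₂ y₂‖ ^ 2 = ‖adjoint T₁ y₁‖ ^ 2 + ‖adjoint T₂ y₂‖ ^ 2 := by
  have horth : ⟪adjoint T₁ y₁, adjoint T₂ y₂⟫_𝕜 = 0 := by
    rw [adjoint_inner_left, ← comp_apply, h0, zero_apply, inner_zero_right]
  rw [norm_add_sq (𝕜 := 𝕜), horth, map_zero, mul_zero, add_zero]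

end Douglas

theorem lp.hasSum_norm_sq {ι : Type*} {E : ι → Type*} [∀ i, NormedAddCommGroup (E i)]
    (x : lp E 2) : HasSum (fun i => ‖x i‖ ^ 2) (‖x‖ ^ 2) := by
  have h := lp.hasSum_norm (p := 2) (by norm_num) x
  simpa only [ENNReal.toReal_ofNat, Real.rpow_two] using h

namespace IsSynthesis

variable {Λ Γ : ∀ i, H →L[ℂ] G i} {T T₁ T₂ : lp G 2 →L[ℂ] H}

theorem hasSum_norm_sq (hT : IsSynthesis Λ T) (f : H) :
    HasSum (fun i => ‖Λ i f‖ ^ 2) (‖adjoint T f‖ ^ 2) := by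
  simpa only [hT f] using lp.hasSum_norm_sq (adjoint T f)

theorem isKgFrame_iff (hT : IsSynthesis Λ T) (K : H →L[ℂ] H) :
    IsKgFrame K Λ ↔ ∃ A > 0, ∀ f, A * ‖adjoint K f‖ ^ 2 ≤ ‖adjoint T f‖ ^ 2 := by
  simp only [IsKgFrame, (hT.hasSum_norm_sq _).tsum_eq, (hT.hasSum_norm_sq _).summable, true_and]
  constructor
  · rintro ⟨A, _, hA, -, hbounds⟩
    exact ⟨A, hA, fun f => (hbounds f).1⟩
  · rintro ⟨A, hA, hlower⟩
    refine ⟨A, ‖adjoint T‖ ^ 2 + 1, hA, by positivity, fun f => ⟨hlower f, ?_⟩⟩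
    calc ‖adjoint T f‖ ^ 2 ≤ (‖adjoint T‖ * ‖f‖) ^ 2 := by gcongr; exact le_opNorm _ _
      _ ≤ (‖adjoint T‖ ^ 2 + 1) * ‖f‖ ^ 2 := by nlinarith [sq_nonneg ‖f‖]

theorem comp_add_comp (hΛ : IsSynthesis Λ T₁) (hΓ : IsSynthesis Γ T₂) (U₁ U₂ : H →L[ℂ] H) :
    IsSynthesis (fun i => Λ i ∘L U₁ + Γ i ∘L U₂) (adjoint U₁ ∘L T₁ + adjoint U₂ ∘L T₂) :=
  fun f i => by simp [adjoint_comp, hΛ _ i, hΓ _ i]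

end IsSynthesis

theorem isKgFrame_comp_add_comp_of_range_subset_general
    (K : H →L[ℂ] H) (Λ Γ : ∀ i, H →L[ℂ] G i)
    (hΛ : IsKgFrame K Λ)
    (T₁ T₂ : lp G 2 →L[ℂ] H) (hT₁ : IsSynthesis Λ T₁) (hT₂ : IsSynthesis Γ T₂)
    (h0 : T₁ ∘L ContinuousLinearMap.adjoint T₂ = 0)
    (U₁ U₂ : H →L[ℂ] H)
    (h₁ : Set.range T₁ ⊆ Set.range (ContinuousLinearMap.adjoint U₁ ∘L T₁)) :
    IsKgFrame K (fun i => Λ i ∘L U₁ + Γ i ∘L U₂) := by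
  obtain ⟨A, hA, hlower⟩ := (hT₁.isKgFrame_iff K).1 hΛ
  obtain ⟨c, hc, hmaj⟩ := exists_norm_adjoint_le_of_range_subset T₁ (adjoint U₁ ∘L T₁) h₁
  refine ((hT₁.comp_add_comp hT₂ U₁ U₂).isKgFrame_iff K).2 ⟨A / c ^ 2, by positivity, fun f => ?_⟩
  have hsplit : ‖adjoint (adjoint U₁ ∘L T₁ + adjoint U₂ ∘L T₂) f‖ ^ 2 =
      ‖adjoint T₁ (U₁ f)‖ ^ 2 + ‖adjoint T₂ (U₂ f)‖ ^ 2 := by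
    simpa [adjoint_comp] using
      norm_adjoint_add_adjoint_sq_of_comp_adjoint_eq_zero h0 (U₁ f) (U₂ f)
  have hT₁f_le : ‖adjoint T₁ f‖ ≤ c * ‖adjoint T₁ (U₁ f)‖ := by
    simpa [adjoint_comp] using hmaj f
  calc A / c ^ 2 * ‖adjoint K f‖ ^ 2 ≤ ‖adjoint T₁ f‖ ^ 2 / c ^ 2 := by
        rw [div_mul_eq_mul_div]; gcongr; exact hlower f
    _ ≤ ‖adjoint T₁ (U₁ f)‖ ^ 2 := by
        rw [div_le_iff₀ (by positivity)]; nlinarith [norm_nonneg (adjoint T₁ f)]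
    _ ≤ ‖adjoint (adjoint U₁ ∘L T₁ + adjoint U₂ ∘L T₂) f‖ ^ 2 :=
        hsplit ▸ le_add_of_nonneg_right (sq_nonneg _)

/-- if `Λ`, `Γ` are `K`-g-frames with synthesis operators `T₁`, `T₂`,
`T₁ T₂* = 0`, and `Range(T_j) ⊆ Range(U_j* T_j)` for `j = 1, 2`, then
`(Λᵢ U₁ + Γᵢ U₂)ᵢ` is a `K`-g-frame. -/
theorem isKgFrame_comp_add_comp_of_range_subset
    (K : H →L[ℂ] H) (Λ Γ : ∀ i, H →L[ℂ] G i)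
    (hΛ : IsKgFrame K Λ) (hΓ : IsKgFrame K Γ)
    (T₁ T₂ : lp G 2 →L[ℂ] H) (hT₁ : IsSynthesis Λ T₁) (hT₂ : IsSynthesis Γ T₂)
    (h0 : T₁ ∘L ContinuousLinearMap.adjoint T₂ = 0)
    (U₁ U₂ : H →L[ℂ] H)
    (h₁ : Set.range T₁ ⊆ Set.range (ContinuousLinearMap.adjoint U₁ ∘L T₁))
    (h₂ : Set.range T₂ ⊆ Set.range (ContinuousLinearMap.adjoint U₂ ∘L T₂)) :
    IsKgFrame K (fun i => Λ i ∘L U₁ + Γ i ∘L U₂) :=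
  isKgFrame_comp_add_comp_of_range_subset_general K Λ Γ hΛ T₁ T₂ hT₁ hT₂ h0 U₁ U₂ h₁
end
end

section
/- Let Λ = (Λ_i)_{i∈I} be a Bessel g-sequence for H with bound B. Then for every family (f_i)_{i∈I} with f_i ∈ H_i and ∑_{i∈I} ‖f_i‖² < ∞, the series ∑_{i∈I} Λ_i* f_i converges unconditionally in H (i.e., the family (Λ_i* f_i)_{i∈I} is summable in H). -/
/-!
For a finite set `t` and `s = ∑_{i∈t} Λᵢ* fᵢ`, Cauchy–Schwarz and the Bessel bound give
`‖s‖² = Re ∑_{i∈t} ⟪fᵢ, Λᵢ s⟫ ≤ (∑_{i∈t} ‖fᵢ‖²)^{1/2} (∑_{i∈t} ‖Λᵢ s‖²)^{1/2} ≤ (∑_{i∈t} ‖fᵢ‖²)^{1/2} √B ‖s‖`,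
hence `‖s‖ ≤ √B (∑_{i∈t} ‖fᵢ‖²)^{1/2}`. As `∑ ‖fᵢ‖² < ∞`, this is small for all `t` far out,
which is the Cauchy criterion for `∑ Λᵢ* fᵢ`.
-/

open ContinuousLinearMap

noncomputable section

variable {I : Type*} {H : Type*} [NormedAddCommGroup H] [InnerProductSpace ℂ H] [CompleteSpace H]
  {G : I → Type*} [∀ i, NormedAddCommGroup (G i)] [∀ i, InnerProductSpace ℂ (G i)]
  [∀ i, CompleteSpace (G i)]

open Finset InnerProductSpace

section CauchyCriterion

variable {ι E : Type*} [NormedAddCommGroup E] [CompleteSpace E]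

theorem summable_of_norm_sum_le_mul_sqrt {f : ι → E} {a : ι → ℝ} {C : ℝ} (ha : Summable a)
    (hf : ∀ t : Finset ι, ‖∑ i ∈ t, f i‖ ≤ C * √(∑ i ∈ t, a i)) : Summable f := by
  have hφ : Filter.Tendsto (fun x : ℝ => C * √x) (nhds 0) (nhds 0) :=
    (by fun_prop : Continuous fun x : ℝ => C * √x).tendsto' 0 0 (by simp)
  refine summable_iff_vanishing_norm.2 fun ε hε => ?_
  obtain ⟨δ, hδ, hφδ⟩ := Metric.tendsto_nhds_nhds.1 hφ ε hε
  obtain ⟨s, hs⟩ := summable_iff_vanishing_norm.1 ha δ hδ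
  refine ⟨s, fun t hts => (hf t).trans_lt ?_⟩
  have hsmall := hφδ (x := ∑ i ∈ t, a i) (by simpa [Real.dist_eq] using hs t hts)
  exact (le_abs_self _).trans_lt (by simpa [Real.dist_eq] using hsmall)

end CauchyCriterion

section Adjoint

variable {𝕜 ι E : Type*} [RCLike 𝕜] [NormedAddCommGroup E] [InnerProductSpace 𝕜 E]
  [CompleteSpace E] {F : ι → Type*} [∀ i, NormedAddCommGroup (F i)]
  [∀ i, InnerProductSpace 𝕜 (F i)] [∀ i, CompleteSpace (F i)]

theorem norm_sum_adjoint_apply_le {A : ∀ i, E →L[𝕜] F i} {B : ℝ} {t : Finset ι}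
    (hA : ∀ x, ∑ i ∈ t, ‖A i x‖ ^ 2 ≤ B * ‖x‖ ^ 2) (f : ∀ i, F i) :
    ‖∑ i ∈ t, adjoint (A i) (f i)‖ ≤ √B * √(∑ i ∈ t, ‖f i‖ ^ 2) := by
  set s := ∑ i ∈ t, adjoint (A i) (f i)
  have hAs : √(∑ i ∈ t, ‖A i s‖ ^ 2) ≤ √B * ‖s‖ := calc
    _ ≤ √(B * ‖s‖ ^ 2) := Real.sqrt_le_sqrt (hA s)
    _ = √B * ‖s‖ := by rw [Real.sqrt_mul' _ (by positivity), Real.sqrt_sq (norm_nonneg s)]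
  have hs : ‖s‖ * ‖s‖ ≤ √B * √(∑ i ∈ t, ‖f i‖ ^ 2) * ‖s‖ := calc
    ‖s‖ * ‖s‖ = RCLike.re ⟪∑ i ∈ t, adjoint (A i) (f i), s⟫_𝕜 :=
      (inner_self_eq_norm_mul_norm s).symm
    _ = ∑ i ∈ t, RCLike.re ⟪f i, A i s⟫_𝕜 := by
      simp only [sum_inner, adjoint_inner_left, map_sum]
    _ ≤ ∑ i ∈ t, ‖f i‖ * ‖A i s‖ := sum_le_sum fun i _ => re_inner_le_norm _ _
    _ ≤ √(∑ i ∈ t, ‖f i‖ ^ 2) * √(∑ i ∈ t, ‖A i s‖ ^ 2) := Real.sum_mul_le_sqrt_mul_sqrt _ _ _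
    _ ≤ √(∑ i ∈ t, ‖f i‖ ^ 2) * (√B * ‖s‖) := by gcongr
    _ = √B * √(∑ i ∈ t, ‖f i‖ ^ 2) * ‖s‖ := by ring
  rcases (norm_nonneg s).eq_or_lt with hs0 | hs0
  · rw [← hs0]; positivity
  · exact le_of_mul_le_mul_right hs hs0

end Adjoint

theorem summable_adjoint_apply_of_bessel_general
    (Λ : ∀ i, H →L[ℂ] G i) (B : ℝ)
    (hΛ : ∀ f : H, Summable (fun i => ‖Λ i f‖ ^ 2) ∧ (∑' i, ‖Λ i f‖ ^ 2) ≤ B * ‖f‖ ^ 2)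
    (g : ∀ i, G i) (hg : Summable (fun i => ‖g i‖ ^ 2)) :
    Summable (fun i => ContinuousLinearMap.adjoint (Λ i) (g i)) := by
  have hΛ_finset : ∀ (t : Finset I) (f : H), ∑ i ∈ t, ‖Λ i f‖ ^ 2 ≤ B * ‖f‖ ^ 2 := fun t f =>
    ((hΛ f).1.sum_le_tsum t fun _ _ => sq_nonneg _).trans (hΛ f).2
  exact summable_of_norm_sum_le_mul_sqrt hg fun t => norm_sum_adjoint_apply_le (hΛ_finset t) g

/-- if `Λ` is a Bessel g-sequence with bound `B` and `(fᵢ)ᵢ` satisfies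
`∑ᵢ ‖fᵢ‖² < ∞`, then `∑ᵢ Λᵢ* fᵢ` converges unconditionally in `H`
(i.e. the family `(Λᵢ* fᵢ)ᵢ` is summable). -/
theorem summable_adjoint_apply_of_bessel
    (Λ : ∀ i, H →L[ℂ] G i) (B : ℝ) (hB : 0 < B)
    (hΛ : ∀ f : H, Summable (fun i => ‖Λ i f‖ ^ 2) ∧ (∑' i, ‖Λ i f‖ ^ 2) ≤ B * ‖f‖ ^ 2)
    (g : ∀ i, G i) (hg : Summable (fun i => ‖g i‖ ^ 2)) :
    Summable (fun i => ContinuousLinearMap.adjoint (Λ i) (g i)) :=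
  summable_adjoint_apply_of_bessel_general Λ B hΛ g hg
end
end

section
/- Let K be a bounded linear operator on H and let (f_i)_{i∈I} be a sequence of vectors in H. Then (f_i) is an atomic system for K if and only if (f_i) is a K-frame for H, i.e., there exist constants A, B > 0 such that A‖K* f‖² ≤ ∑_{i∈I} |⟨f, f_i⟩|² ≤ B‖f‖² for all f ∈ H. -/
/-!
The analysis operator `T f = (⟪fᵢ, f⟫)ᵢ` of a Bessel sequence is a bounded map `H → ℓ²` whose
adjoint is the synthesis map `a ↦ ∑ aᵢ fᵢ`. Both conditions thus compare `K*` with `T`, and they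
are equivalent by Douglas' lemma: `‖S g‖ ≤ c ‖T g‖` for all `g` iff every `S* x` equals some `T* a`
with `‖a‖ ≤ c ‖x‖`. One direction is Cauchy–Schwarz applied to `‖S g‖² = ⟪a, T g⟫`; for the
other, `g ↦ ⟪x, S g⟫` factors through a functional on `range T` of norm at most `c ‖x‖`, which
Hahn–Banach extends to `ℓ²` and Riesz represents by some `a`. The frame constant is `A = c⁻²`.
-/

open ContinuousLinearMap InnerProductSpace
open scoped InnerProductSpace

section Factorization

variable {𝕜 : Type*} [RCLike 𝕜] {E F G : Type*}

theorem LinearMap.exists_inner_eq_of_norm_apply_le [AddCommGroup E] [Module 𝕜 E]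
    [NormedAddCommGroup G] [InnerProductSpace 𝕜 G] [CompleteSpace G]
    (T : E →ₗ[𝕜] G) (ℓ : E →ₗ[𝕜] 𝕜) {C : ℝ} (hC : 0 ≤ C) (h : ∀ g, ‖ℓ g‖ ≤ C * ‖T g‖) :
    ∃ a : G, ‖a‖ ≤ C ∧ ∀ g, ℓ g = ⟪a, T g⟫_𝕜 := by
  have hker : LinearMap.ker T ≤ LinearMap.ker ℓ := fun g hg => by
    simpa [LinearMap.mem_ker.mp hg] using h g
  let φ : LinearMap.range T →ₗ[𝕜] 𝕜 :=
    (LinearMap.ker T).liftQ ℓ hker ∘ₗ T.quotKerEquivRange.symm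
  have hφ : ∀ g, φ ⟨T g, LinearMap.mem_range_self T g⟩ = ℓ g := fun g => by
    simp [φ, LinearMap.quotKerEquivRange_symm_apply_image]
  have hφ_le : ∀ y, ‖φ y‖ ≤ C * ‖y‖ := by
    rintro ⟨_, g, rfl⟩
    exact (hφ g).symm ▸ h g
  obtain ⟨ℓ', hℓ', hnorm⟩ := exists_extension_norm_eq _ (φ.mkContinuous C hφ_le)
  refine ⟨(toDual 𝕜 G).symm ℓ', ?_, fun g => ?_⟩
  · rw [LinearIsometryEquiv.norm_map, hnorm]
    exact LinearMap.mkContinuous_norm_le _ hC _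
  · rw [toDual_symm_apply, hℓ' ⟨T g, LinearMap.mem_range_self T g⟩,
      LinearMap.mkContinuous_apply, hφ]

variable [NormedAddCommGroup E] [InnerProductSpace 𝕜 E] [CompleteSpace E]
  [NormedAddCommGroup F] [InnerProductSpace 𝕜 F] [CompleteSpace F]
  [NormedAddCommGroup G] [InnerProductSpace 𝕜 G] [CompleteSpace G]

theorem ContinuousLinearMap.exists_adjoint_eq_of_norm_apply_le (S : E →L[𝕜] F) (T : E →L[𝕜] G)
    {c : ℝ} (hc : 0 ≤ c) (h : ∀ g, ‖S g‖ ≤ c * ‖T g‖) (x : F) :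
    ∃ a : G, adjoint T a = adjoint S x ∧ ‖a‖ ≤ c * ‖x‖ := by
  obtain ⟨a, ha, hℓ⟩ := (T : E →ₗ[𝕜] G).exists_inner_eq_of_norm_apply_le
    (innerₛₗ 𝕜 x ∘ₗ (S : E →ₗ[𝕜] F)) (mul_nonneg (norm_nonneg x) hc) fun g =>
      calc ‖⟪x, S g⟫_𝕜‖ ≤ ‖x‖ * ‖S g‖ := norm_inner_le_norm x (S g)
        _ ≤ ‖x‖ * (c * ‖T g‖) := by gcongr; exact h g
        _ = ‖x‖ * c * ‖T g‖ := by ring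
  refine ⟨a, ext_inner_right 𝕜 fun g => ?_, by linarith⟩
  simpa [adjoint_inner_left] using (hℓ g).symm

theorem ContinuousLinearMap.norm_apply_le_of_forall_exists_adjoint_eq (S : E →L[𝕜] F)
    (T : E →L[𝕜] G) {c : ℝ} (hc : 0 ≤ c)
    (h : ∀ x, ∃ a : G, adjoint T a = adjoint S x ∧ ‖a‖ ≤ c * ‖x‖) (g : E) :
    ‖S g‖ ≤ c * ‖T g‖ := by
  obtain ⟨a, hSa, ha⟩ := h (S g)
  have hsq : ‖S g‖ ^ 2 ≤ c * ‖T g‖ * ‖S g‖ :=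
    calc ‖S g‖ ^ 2 = ‖⟪a, T g⟫_𝕜‖ := by
          rw [← adjoint_inner_left, hSa, adjoint_inner_left, inner_self_eq_norm_sq_to_K]
          simp
      _ ≤ ‖a‖ * ‖T g‖ := norm_inner_le_norm a (T g)
      _ ≤ c * ‖S g‖ * ‖T g‖ := by gcongr
      _ = c * ‖T g‖ * ‖S g‖ := by ring
  rcases (norm_nonneg (S g)).eq_or_lt with hS | hS
  · rw [← hS]
    positivity
  · exact le_of_mul_le_mul_right (by nlinarith) hS

end Factorization

section AnalysisOperator

variable {𝕜 : Type*} [RCLike 𝕜] {ι H : Type*} [NormedAddCommGroup H] [InnerProductSpace 𝕜 H]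

theorem memℓp_inner_of_summable (v : ι → H) {f : H}
    (hf : Summable fun i => ‖⟪f, v i⟫_𝕜‖ ^ 2) :
    Memℓp (fun i => ⟪v i, f⟫_𝕜) 2 :=
  memℓp_gen <| by simpa [norm_inner_symm] using hf

def analysisLinearMap (v : ι → H) (hv : ∀ f : H, Summable fun i => ‖⟪f, v i⟫_𝕜‖ ^ 2) :
    H →ₗ[𝕜] lp (fun _ : ι => 𝕜) 2 where
  toFun f := ⟨fun i => ⟪v i, f⟫_𝕜, memℓp_inner_of_summable v (hv f)⟩
  map_add' f g := by ext i; exact inner_add_right _ _ _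
  map_smul' c f := by ext i; exact inner_smul_right _ _ _

theorem analysisLinearMap_apply (v : ι → H) (hv) (f : H) (i : ι) :
    analysisLinearMap v hv f i = ⟪v i, f⟫_𝕜 := rfl

theorem norm_analysisLinearMap_sq (v : ι → H) (hv) (f : H) :
    ‖analysisLinearMap (𝕜 := 𝕜) v hv f‖ ^ 2 = ∑' i, ‖⟪f, v i⟫_𝕜‖ ^ 2 := by
  have := lp.norm_rpow_eq_tsum (p := 2) (by norm_num) (analysisLinearMap v hv f)
  simp_all [analysisLinearMap_apply, norm_inner_symm]

noncomputable def analysisOp (v : ι → H) (hv : ∀ f : H, Summable fun i => ‖⟪f, v i⟫_𝕜‖ ^ 2) {B : ℝ}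
    (hB : ∀ f : H, ∑' i, ‖⟪f, v i⟫_𝕜‖ ^ 2 ≤ B * ‖f‖ ^ 2) : H →L[𝕜] lp (fun _ : ι => 𝕜) 2 :=
  (analysisLinearMap v hv).mkContinuous √B fun f =>
    calc ‖analysisLinearMap v hv f‖ = √(‖analysisLinearMap v hv f‖ ^ 2) :=
          (Real.sqrt_sq (norm_nonneg _)).symm
      _ ≤ √(B * ‖f‖ ^ 2) := Real.sqrt_le_sqrt (by rw [norm_analysisLinearMap_sq]; exact hB f)
      _ = √B * ‖f‖ := by rw [Real.sqrt_mul' _ (by positivity), Real.sqrt_sq (norm_nonneg f)]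

theorem norm_analysisOp_sq (v : ι → H) (hv) {B : ℝ} (hB) (f : H) :
    ‖analysisOp (𝕜 := 𝕜) v hv (B := B) hB f‖ ^ 2 = ∑' i, ‖⟪f, v i⟫_𝕜‖ ^ 2 :=
  norm_analysisLinearMap_sq v hv f

theorem hasSum_adjoint_analysisOp [CompleteSpace H] (v : ι → H) (hv) {B : ℝ} (hB)
    (a : lp (fun _ : ι => 𝕜) 2) :
    HasSum (fun i => a i • v i) (adjoint (analysisOp v hv (B := B) hB) a) := by
  classical
  convert (adjoint (analysisOp v hv hB)).hasSum (lp.hasSum_single (by norm_num) a) using 2 with i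
  refine ext_inner_right 𝕜 fun g => ?_
  rw [adjoint_inner_left, lp.inner_single_left, inner_smul_left, RCLike.inner_apply]
  exact mul_comm _ _

end AnalysisOperator

theorem le_mul_iff_inv_sq_mul_sq_le {x y c : ℝ} (hx : 0 ≤ x) (hy : 0 ≤ y) (hc : 0 < c) :
    x ≤ c * y ↔ (c ^ 2)⁻¹ * x ^ 2 ≤ y ^ 2 := by
  rw [inv_mul_le_iff₀ (by positivity), ← mul_pow,
    pow_le_pow_iff_left₀ hx (by positivity) two_ne_zero]

theorem atomic_system_iff_kFrame_general
    {I : Type*} {H : Type*} [NormedAddCommGroup H] [InnerProductSpace ℂ H]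
    [CompleteSpace H] (K : H →L[ℂ] H) (v : I → H) :
    ((∃ B : ℝ, 0 < B ∧ ∀ f : H,
        Summable (fun i => ‖(inner ℂ f (v i) : ℂ)‖ ^ 2) ∧
        (∑' i, ‖(inner ℂ f (v i) : ℂ)‖ ^ 2) ≤ B * ‖f‖ ^ 2) ∧
      ∃ c : ℝ, 0 < c ∧ ∀ f : H, ∃ a : lp (fun _ : I => ℂ) 2,
        ‖a‖ ≤ c * ‖f‖ ∧ HasSum (fun i => a i • v i) (K f))
    ↔ ∃ A B : ℝ, 0 < A ∧ 0 < B ∧ ∀ f : H,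
        Summable (fun i => ‖(inner ℂ f (v i) : ℂ)‖ ^ 2) ∧
        A * ‖ContinuousLinearMap.adjoint K f‖ ^ 2 ≤ (∑' i, ‖(inner ℂ f (v i) : ℂ)‖ ^ 2) ∧
        (∑' i, ‖(inner ℂ f (v i) : ℂ)‖ ^ 2) ≤ B * ‖f‖ ^ 2 := by
  constructor
  · rintro ⟨⟨B, hB, hv⟩, c, hc, hK⟩
    obtain ⟨hsum, hupper⟩ := forall_and.1 hv
    let T := analysisOp v hsum hupper
    have hKT : ∀ g, ‖adjoint K g‖ ≤ c * ‖T g‖ :=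
      (adjoint K).norm_apply_le_of_forall_exists_adjoint_eq T hc.le fun f => by
        obtain ⟨a, ha, hKf⟩ := hK f
        refine ⟨a, (hasSum_adjoint_analysisOp v hsum hupper a).unique ?_, ha⟩
        rwa [adjoint_adjoint]
    refine ⟨(c ^ 2)⁻¹, B, by positivity, hB, fun f => ⟨hsum f, ?_, hupper f⟩⟩
    rw [← norm_analysisOp_sq v hsum hupper f]
    exact (le_mul_iff_inv_sq_mul_sq_le (norm_nonneg _) (norm_nonneg _) hc).1 (hKT f)
  · rintro ⟨A, B, hA, hB, hv⟩
    obtain ⟨hsum, hlower, hupper⟩ : _ ∧ _ ∧ _ := by simpa only [forall_and] using hv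
    let T := analysisOp v hsum hupper
    have hKT : ∀ g, ‖adjoint K g‖ ≤ (√A)⁻¹ * ‖T g‖ := fun g =>
      (le_mul_iff_inv_sq_mul_sq_le (norm_nonneg _) (norm_nonneg _) (by positivity)).2 <| by
        rw [inv_pow, inv_inv, Real.sq_sqrt hA.le, norm_analysisOp_sq]
        exact hlower g
    refine ⟨⟨B, hB, fun f => ⟨hsum f, hupper f⟩⟩, (√A)⁻¹, by positivity, fun f => ?_⟩
    obtain ⟨a, ha, hnorm⟩ := (adjoint K).exists_adjoint_eq_of_norm_apply_le T (by positivity) hKT f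
    rw [adjoint_adjoint] at ha
    exact ⟨a, hnorm, ha ▸ hasSum_adjoint_analysisOp v hsum hupper a⟩

/-- a sequence `(fᵢ)ᵢ` in `H` is an atomic system for `K` (a Bessel sequence
such that for some `c > 0`, every `f ∈ H` has `K f = ∑ᵢ aᵢ fᵢ` for some `a ∈ ℓ²(I)` with
`‖a‖ ≤ c ‖f‖`) iff `(fᵢ)ᵢ` is a `K`-frame, i.e. there are `A, B > 0` with
`A ‖K* f‖² ≤ ∑ᵢ |⟨f, fᵢ⟩|² ≤ B ‖f‖²` for all `f`. -/
theorem atomic_system_iff_kFrame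
    {I : Type*} [Countable I] {H : Type*} [NormedAddCommGroup H] [InnerProductSpace ℂ H]
    [CompleteSpace H] (K : H →L[ℂ] H) (v : I → H) :
    ((∃ B : ℝ, 0 < B ∧ ∀ f : H,
        Summable (fun i => ‖(inner ℂ f (v i) : ℂ)‖ ^ 2) ∧
        (∑' i, ‖(inner ℂ f (v i) : ℂ)‖ ^ 2) ≤ B * ‖f‖ ^ 2) ∧
      ∃ c : ℝ, 0 < c ∧ ∀ f : H, ∃ a : lp (fun _ : I => ℂ) 2,
        ‖a‖ ≤ c * ‖f‖ ∧ HasSum (fun i => a i • v i) (K f))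
    ↔ ∃ A B : ℝ, 0 < A ∧ 0 < B ∧ ∀ f : H,
        Summable (fun i => ‖(inner ℂ f (v i) : ℂ)‖ ^ 2) ∧
        A * ‖ContinuousLinearMap.adjoint K f‖ ^ 2 ≤ (∑' i, ‖(inner ℂ f (v i) : ℂ)‖ ^ 2) ∧
        (∑' i, ‖(inner ℂ f (v i) : ℂ)‖ ^ 2) ≤ B * ‖f‖ ^ 2 :=
  atomic_system_iff_kFrame_general K v
end
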